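/- Let q>1 and let m=(m_p)_{p≥0} be a sequence of positive real numbers with m_0=1. Then m preserves q-Gevrey order if and only if m is of q-Gevrey order 0, i.e., if and only if there exist a,A>0 and α,β∈ℝ such that a^p·(p!)^α ≤ m_p ≤ A^p·(p!)^β for all p∈ℕ₀. -/
import Mathlib


/-- Membership in `E[[t]]_{q,s}`: there are `A, B > 0` and `α ∈ ℝ` with
`‖a_p‖ ≤ A B^p (p!)^α q^{s p(p-1)/2}` for all `p`. -/
def MemQGevrey {E : Type*} [NormedAddCommGroup E] (q s : ℝ) (a : ℕ → E) : Prop :=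
  ∃ A B α : ℝ, 0 < A ∧ 0 < B ∧ ∀ p : ℕ,
    ‖a p‖ ≤ A * B ^ p * (p.factorial : ℝ) ^ α * q ^ (s * ((p * (p - 1) : ℕ) : ℝ) / 2)

lemma aux_transfer {E : Type*} [NormedAddCommGroup E] {q s : ℝ}
    {a b : ℕ → E} {C δ : ℝ} (hC : 0 < C)
    (hb : ∀ p, ‖b p‖ ≤ C ^ p * (p.factorial : ℝ) ^ δ * ‖a p‖)
    (h : MemQGevrey q s a) : MemQGevrey q s b := by
  obtain ⟨A, B, α, hA, hB, hbound⟩ := h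
  refine ⟨A, C * B, δ + α, hA, by positivity, fun p => ?_⟩
  have hfac : (0:ℝ) < (p.factorial : ℝ) := by exact_mod_cast p.factorial_pos
  calc ‖b p‖ ≤ C ^ p * (p.factorial : ℝ) ^ δ * ‖a p‖ := hb p
    _ ≤ C ^ p * (p.factorial : ℝ) ^ δ *
        (A * B ^ p * (p.factorial : ℝ) ^ α * q ^ (s * ((p * (p - 1) : ℕ) : ℝ) / 2)) := by
        have := hbound p
        have h1 : (0:ℝ) ≤ C ^ p * (p.factorial : ℝ) ^ δ := by positivity
        exact mul_le_mul_of_nonneg_left this h1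
    _ = A * (C * B) ^ p * (p.factorial : ℝ) ^ (δ + α) *
        q ^ (s * ((p * (p - 1) : ℕ) : ℝ) / 2) := by
        rw [Real.rpow_add hfac, mul_pow]; ring

/-- a normalized positive sequence `m` preserves `q`-Gevrey order iff it is
of `q`-Gevrey order `0`, i.e. lies between two Gevrey sequences. -/
theorem stmt5 {E : Type*} [NormedAddCommGroup E] [NormedSpace ℂ E] [CompleteSpace E]
    [Nontrivial E]
    (q : ℝ) (hq : 1 < q) (m : ℕ → ℝ) (hm : ∀ p : ℕ, 0 < m p) (hm0 : m 0 = 1) :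
    (∀ s : ℝ, ∀ a : ℕ → E,
        MemQGevrey q s a ↔ MemQGevrey q s (fun p => (((m p)⁻¹ : ℝ) : ℂ) • a p)) ↔
    (∃ a A α β : ℝ, 0 < a ∧ 0 < A ∧ ∀ p : ℕ,
        a ^ p * (p.factorial : ℝ) ^ α ≤ m p ∧ m p ≤ A ^ p * (p.factorial : ℝ) ^ β) := by
  have hq0 : (0:ℝ) < q := lt_trans one_pos hq
  constructor
  · intro h
    obtain ⟨x, hx⟩ : ∃ x : E, x ≠ 0 := exists_ne 0
    have hxn : (0:ℝ) < ‖x‖ := norm_pos_iff.mpr hx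
    -- constant sequence x is in class at s = 0
    have hconst : MemQGevrey q 0 (fun _ : ℕ => x) := by
      refine ⟨‖x‖ + 1, 1, 0, by positivity, one_pos, fun p => ?_⟩
      simp only [one_pow, Real.rpow_zero, mul_one, zero_mul, zero_div]
      linarith
    -- upper bound: apply mpr to a p = m p • x
    have hconst' : MemQGevrey q 0
        (fun p => (((m p)⁻¹ : ℝ) : ℂ) • (((m p : ℝ) : ℂ) • x)) := by
      refine ⟨‖x‖ + 1, 1, 0, by positivity, one_pos, fun p => ?_⟩
      have hmp : ((m p : ℝ) : ℂ) ≠ 0 := by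
        exact_mod_cast ne_of_gt (hm p)
      have : (((m p)⁻¹ : ℝ) : ℂ) • (((m p : ℝ) : ℂ) • x) = x := by
        rw [smul_smul]
        push_cast
        rw [inv_mul_cancel₀ hmp, one_smul]
      simp only [this, one_pow, Real.rpow_zero, mul_one, zero_mul, zero_div]
      linarith
    have hupper := (h 0 (fun p => ((m p : ℝ) : ℂ) • x)).mpr hconst'
    have hlower := (h 0 (fun _ => x)).mp hconst
    obtain ⟨A₁, B₁, α₁, hA₁, hB₁, hU⟩ := hupper
    obtain ⟨A₂, B₂, α₂, hA₂, hB₂, hL⟩ := hlower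
    -- simplify q exponent at s = 0
    have hU' : ∀ p, m p * ‖x‖ ≤ A₁ * B₁ ^ p * (p.factorial : ℝ) ^ α₁ := by
      intro p
      have := hU p
      simp only [norm_smul, Complex.norm_real, Real.norm_eq_abs,
        abs_of_pos (hm p), zero_mul, zero_div, Real.rpow_zero, mul_one] at this
      exact this
    have hL' : ∀ p, (m p)⁻¹ * ‖x‖ ≤ A₂ * B₂ ^ p * (p.factorial : ℝ) ^ α₂ := by
      intro p
      have := hL p
      simp only [norm_smul, Complex.norm_real, Real.norm_eq_abs,
        abs_of_pos (inv_pos.mpr (hm p)), zero_mul, zero_div, Real.rpow_zero,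
        mul_one] at this
      exact this
    refine ⟨min (‖x‖ / A₂) 1 * B₂⁻¹, max (A₁ / ‖x‖) 1 * B₁, -α₂, α₁,
      by positivity, by positivity, fun p => ?_⟩
    rcases Nat.eq_zero_or_pos p with hp | hp
    · subst hp
      simp [hm0]
    constructor
    · -- lower bound
      have hfac : (0:ℝ) < (p.factorial : ℝ) := by exact_mod_cast p.factorial_pos
      have hY : (0:ℝ) < A₂ / ‖x‖ * B₂ ^ p * (p.factorial : ℝ) ^ α₂ := by positivity
      have h1 : (m p)⁻¹ ≤ A₂ / ‖x‖ * B₂ ^ p * (p.factorial : ℝ) ^ α₂ := by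
        rw [div_mul_eq_mul_div, div_mul_eq_mul_div, le_div_iff₀ hxn]
        linarith [hL' p]
      have h2 : (A₂ / ‖x‖ * B₂ ^ p * (p.factorial : ℝ) ^ α₂)⁻¹ ≤ m p :=
        (inv_le_comm₀ (hm p) hY).mp h1
      have heq : (A₂ / ‖x‖ * B₂ ^ p * (p.factorial : ℝ) ^ α₂)⁻¹
          = (‖x‖ / A₂) * B₂⁻¹ ^ p * (p.factorial : ℝ) ^ (-α₂) := by
        rw [Real.rpow_neg hfac.le, inv_pow, mul_inv, mul_inv, inv_div]
      rw [heq] at h2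
      have hk : (min (‖x‖ / A₂) 1) ^ p ≤ ‖x‖ / A₂ :=
        le_trans (pow_le_of_le_one (by positivity) (min_le_right _ _)
          (Nat.pos_iff_ne_zero.mp hp)) (min_le_left _ _)
      calc (min (‖x‖ / A₂) 1 * B₂⁻¹) ^ p * (p.factorial : ℝ) ^ (-α₂)
          = (min (‖x‖ / A₂) 1) ^ p * B₂⁻¹ ^ p * (p.factorial : ℝ) ^ (-α₂) := by
            rw [mul_pow]
        _ ≤ (‖x‖ / A₂) * B₂⁻¹ ^ p * (p.factorial : ℝ) ^ (-α₂) := by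
            have h3 : (0:ℝ) ≤ B₂⁻¹ ^ p * (p.factorial : ℝ) ^ (-α₂) := by positivity
            calc (min (‖x‖ / A₂) 1) ^ p * B₂⁻¹ ^ p * (p.factorial : ℝ) ^ (-α₂)
                = (min (‖x‖ / A₂) 1) ^ p * (B₂⁻¹ ^ p * (p.factorial : ℝ) ^ (-α₂)) := by ring
              _ ≤ (‖x‖ / A₂) * (B₂⁻¹ ^ p * (p.factorial : ℝ) ^ (-α₂)) :=
                  mul_le_mul_of_nonneg_right hk h3
              _ = (‖x‖ / A₂) * B₂⁻¹ ^ p * (p.factorial : ℝ) ^ (-α₂) := by ring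
        _ ≤ m p := h2
    · -- upper bound
      have hfac : (0:ℝ) < (p.factorial : ℝ) := by exact_mod_cast p.factorial_pos
      have h1 : m p ≤ A₁ / ‖x‖ * B₁ ^ p * (p.factorial : ℝ) ^ α₁ := by
        rw [div_mul_eq_mul_div, div_mul_eq_mul_div, le_div_iff₀ hxn]
        linarith [hU' p]
      have h2 : A₁ / ‖x‖ ≤ (max (A₁ / ‖x‖) 1) ^ p :=
        le_trans (le_max_left _ _)
          (le_self_pow₀ (le_max_right _ _) (Nat.pos_iff_ne_zero.mp hp))
      calc m p ≤ A₁ / ‖x‖ * B₁ ^ p * (p.factorial : ℝ) ^ α₁ := h1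
        _ ≤ (max (A₁ / ‖x‖) 1) ^ p * B₁ ^ p * (p.factorial : ℝ) ^ α₁ := by
            have h3 : (0:ℝ) ≤ B₁ ^ p * (p.factorial : ℝ) ^ α₁ := by positivity
            calc A₁ / ‖x‖ * B₁ ^ p * (p.factorial : ℝ) ^ α₁
                = A₁ / ‖x‖ * (B₁ ^ p * (p.factorial : ℝ) ^ α₁) := by ring
              _ ≤ (max (A₁ / ‖x‖) 1) ^ p * (B₁ ^ p * (p.factorial : ℝ) ^ α₁) :=
                  mul_le_mul_of_nonneg_right h2 h3
              _ = (max (A₁ / ‖x‖) 1) ^ p * B₁ ^ p * (p.factorial : ℝ) ^ α₁ := by ring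
        _ = (max (A₁ / ‖x‖) 1 * B₁) ^ p * (p.factorial : ℝ) ^ α₁ := by rw [mul_pow]
  · rintro ⟨a₀, A₀, α, β, ha₀, hA₀, hbounds⟩
    intro s a
    constructor
    · intro ha
      refine aux_transfer (C := a₀⁻¹) (δ := -α) (by positivity) (fun p => ?_) ha
      have hfac : (0:ℝ) < (p.factorial : ℝ) := by exact_mod_cast p.factorial_pos
      have hnorm : ‖(((m p)⁻¹ : ℝ) : ℂ) • a p‖ = (m p)⁻¹ * ‖a p‖ := by
        rw [norm_smul, Complex.norm_real, Real.norm_eq_abs,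
          abs_of_pos (inv_pos.mpr (hm p))]
      rw [hnorm]
      have hml : a₀ ^ p * (p.factorial : ℝ) ^ α ≤ m p := (hbounds p).1
      have h1 : (m p)⁻¹ ≤ (a₀ ^ p * (p.factorial : ℝ) ^ α)⁻¹ := by
        apply inv_anti₀ (by positivity) hml
      have h2 : (a₀ ^ p * (p.factorial : ℝ) ^ α)⁻¹
          = a₀⁻¹ ^ p * (p.factorial : ℝ) ^ (-α) := by
        rw [mul_inv, inv_pow, Real.rpow_neg (le_of_lt hfac)]
      exact mul_le_mul_of_nonneg_right (h2 ▸ h1) (norm_nonneg _)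
    · intro hb
      refine aux_transfer (C := A₀) (δ := β) hA₀ (fun p => ?_) hb
      have hnorm : ‖(((m p)⁻¹ : ℝ) : ℂ) • a p‖ = (m p)⁻¹ * ‖a p‖ := by
        rw [norm_smul, Complex.norm_real, Real.norm_eq_abs,
          abs_of_pos (inv_pos.mpr (hm p))]
      have : ‖a p‖ = m p * ‖(((m p)⁻¹ : ℝ) : ℂ) • a p‖ := by
        rw [hnorm, ← mul_assoc, mul_inv_cancel₀ (ne_of_gt (hm p)), one_mul]
      rw [this]
      exact mul_le_mul_of_nonneg_right
        (le_trans (hbounds p).2 (le_refl _)) (norm_nonneg _)
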